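/- arXiv:1810.02531 — 2 statements merged into one kernel-verified Lean document; each statement's English description precedes it below -/
import Mathlib

section
/- Suppose e(k+1) = W(k) e(k) where each W(k) is an independent random matrix with 𝔼[W(k)ᵀW(k)] = M symmetric PSD doubly stochastic, and e(0) is orthogonal to 𝟙 and each W(k) preserves orthogonality to 𝟙. Then 𝔼[‖e(k)‖₂²] ≤ λ₂(M)^k ‖e(0)‖₂². -/
/-! Since `e k` is a measurable function of `W 0, …, W (k - 1)`, it is independent of `W k`, so
`𝔼 ‖W k e k‖² = 𝔼 [e kᵀ (W kᵀ W k) e k] = 𝔼 [e kᵀ M e k]`. Every `e k` lies in `𝟙ᗮ`, which `M`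
preserves; the spectral theorem for the symmetric restriction of `M` to `𝟙ᗮ` bounds the quadratic
form there by `λ₂(M) ‖e k‖²`, and `λ₂(M) ≥ 0` lets the bound iterate. -/

open Matrix MeasureTheory ProbabilityTheory

noncomputable def lambda2 {n : ℕ} (M : Matrix (Fin n) (Fin n) ℝ) : ℝ :=
  sSup {μ : ℝ | ∃ v : Fin n → ℝ, v ≠ 0 ∧ (∑ k, v k) = 0 ∧ M *ᵥ v = μ • v}

open Module.End in
theorem LinearMap.IsSymmetric.inner_map_self_le {E : Type*} [NormedAddCommGroup E]
    [InnerProductSpace ℝ E] [FiniteDimensional ℝ E] {T : E →ₗ[ℝ] E} (hT : T.IsSymmetric)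
    {c : ℝ} (hc : ∀ μ, HasEigenvalue T μ → μ ≤ c) (x : E) :
    inner ℝ (T x) x ≤ c * ‖x‖ ^ 2 := by
  let b := hT.eigenvectorBasis rfl
  have hTx : inner ℝ (T x) x = ∑ i, hT.eigenvalues rfl i * b.repr x i ^ 2 := by
    rw [← b.repr.inner_map_map]
    simp only [PiLp.inner_apply, RCLike.inner_apply, conj_trivial, b,
      hT.eigenvectorBasis_apply_self_apply, RCLike.ofReal_real_eq_id, id_eq]
    exact Finset.sum_congr rfl fun i _ => by ring
  have hx : ‖x‖ ^ 2 = ∑ i, b.repr x i ^ 2 := by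
    rw [← b.repr.norm_map, EuclideanSpace.norm_sq_eq]
    simp
  rw [hTx, hx, Finset.mul_sum]
  exact Finset.sum_le_sum fun i _ =>
    mul_le_mul_of_nonneg_right (hc _ (hT.hasEigenvalue_eigenvalues rfl i)) (sq_nonneg _)

theorem Matrix.PosSemidef.apply_eq_zero_of_diag_eq_zero {ι : Type*} [Fintype ι] [DecidableEq ι]
    {A : Matrix ι ι ℝ} (hA : A.PosSemidef) {i : ι} (hi : A i i = 0) (j : ι) : A j i = 0 := by
  have hsymm : A i j = A j i := by simpa using congrFun (congrFun hA.1 j) i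
  -- the form at `t • eᵢ + eⱼ` is affine in `t`, so its slope must vanish
  have hquad (t : ℝ) : 0 ≤ 0 * (t * t) + 2 * A j i * t + A j j := by
    have := hA.dotProduct_mulVec_nonneg (Pi.single i t + Pi.single j 1)
    simp only [star_trivial, mulVec_add, mulVec_single, op_smul_eq_smul, MulOpposite.op_one,
      one_smul, dotProduct_add, dotProduct_smul, add_dotProduct, single_dotProduct, col_apply, hi,
      mul_zero, one_mul, zero_add, smul_eq_mul, hsymm] at this
    linarith
  have := discrim_le_zero hquad
  rw [discrim] at this
  nlinarith [sq_nonneg (A j i)]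

theorem Matrix.PosSemidef.diag_ne_zero_of_sum_col_eq_one {ι : Type*} [Fintype ι] [DecidableEq ι]
    {A : Matrix ι ι ℝ} (hA : A.PosSemidef) (hcol : ∀ j, ∑ i, A i j = 1) (i : ι) : A i i ≠ 0 :=
  fun h => one_ne_zero <| (hcol i).symm.trans <|
    Finset.sum_eq_zero fun j _ => hA.apply_eq_zero_of_diag_eq_zero h j

theorem Matrix.sum_mulVec_of_sum_col_eq_one {ι : Type*} [Fintype ι] {A : Matrix ι ι ℝ}
    (hA : ∀ j, ∑ i, A i j = 1) (v : ι → ℝ) : ∑ i, (A *ᵥ v) i = ∑ i, v i := by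
  simp only [mulVec, dotProduct]
  rw [Finset.sum_comm]
  simp [← Finset.sum_mul, hA]

theorem Matrix.sum_sq_mulVec {ι κ : Type*} [Fintype ι] [Fintype κ] (A : Matrix κ ι ℝ)
    (v : ι → ℝ) : ∑ l, (A *ᵥ v) l ^ 2 = v ⬝ᵥ ((Aᵀ * A) *ᵥ v) := by
  rw [← mulVec_mulVec, dotProduct_mulVec, vecMul_transpose]
  simp [dotProduct, sq]

theorem Matrix.dotProduct_mulVec_eq_sum {ι : Type*} [Fintype ι] (B : Matrix ι ι ℝ)
    (v : ι → ℝ) : v ⬝ᵥ (B *ᵥ v) = ∑ i, ∑ j, B i j * (v i * v j) := by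
  simp only [dotProduct, mulVec, Finset.mul_sum]
  exact Finset.sum_congr rfl fun i _ => Finset.sum_congr rfl fun j _ => by ring

section lambda2

variable {n : ℕ} {M : Matrix (Fin n) (Fin n) ℝ}

theorem le_lambda2 {v : Fin n → ℝ} {μ : ℝ} (hv : v ≠ 0) (hv₁ : ∑ i, v i = 0)
    (hMv : M *ᵥ v = μ • v) : μ ≤ lambda2 M := by
  refine le_csSup ((Module.End.finite_hasEigenvalue (toLin' M)).subset ?_).bddAbove
    ⟨v, hv, hv₁, hMv⟩
  rintro μ' ⟨w, hw, -, hMw⟩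
  exact Module.End.hasEigenvalue_of_hasEigenvector ⟨Module.End.mem_eigenspace_iff.2 hMw, hw⟩

theorem lambda2_nonneg (hM : M.PosSemidef) : 0 ≤ lambda2 M := by
  rcases Set.eq_empty_or_nonempty
    {μ : ℝ | ∃ v : Fin n → ℝ, v ≠ 0 ∧ (∑ k, v k) = 0 ∧ M *ᵥ v = μ • v}
    with h | ⟨μ, v, hv, hv₁, hMv⟩
  · rw [lambda2, h, Real.sSup_empty]
  · have hvv : 0 < v ⬝ᵥ v := by simpa using dotProduct_star_self_pos_iff.2 hv
    have : 0 ≤ μ * (v ⬝ᵥ v) := by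
      simpa [hMv, dotProduct_smul] using hM.dotProduct_mulVec_nonneg v
    exact (nonneg_of_mul_nonneg_left this hvv).trans (le_lambda2 hv hv₁ hMv)

theorem dotProduct_mulVec_le_lambda2_mul (hM : M.IsHermitian) (hcol : ∀ j, ∑ i, M i j = 1)
    {v : Fin n → ℝ} (hv : ∑ i, v i = 0) : v ⬝ᵥ (M *ᵥ v) ≤ lambda2 M * ∑ i, v i ^ 2 := by
  let S : Submodule ℝ (EuclideanSpace ℝ (Fin n)) := (ℝ ∙ WithLp.toLp 2 fun _ => 1)ᗮ
  have mem_S (x : EuclideanSpace ℝ (Fin n)) : x ∈ S ↔ ∑ i, x i = 0 := by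
    simp [S, Submodule.mem_orthogonal_singleton_iff_inner_right, PiLp.inner_apply]
  have hS : ∀ x ∈ S, M.toEuclideanLin x ∈ S := fun x hx => by
    rw [mem_S] at hx ⊢
    simpa [Matrix.sum_mulVec_of_sum_col_eq_one hcol] using hx
  have hT := (isSymmetric_toEuclideanLin_iff.2 hM).restrict_invariant hS
  have key := hT.inner_map_self_le (c := lambda2 M) ?_ ⟨WithLp.toLp 2 v, (mem_S _).2 hv⟩
  · simpa [PiLp.inner_apply, EuclideanSpace.norm_sq_eq, dotProduct, mul_comm] using key
  · intro μ hμ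
    obtain ⟨x, hx⟩ := hμ.exists_hasEigenvector
    refine le_lambda2 (v := (x : EuclideanSpace ℝ (Fin n)).ofLp) ?_ ((mem_S _).1 x.2) ?_
    · intro h0
      exact hx.2 (Subtype.ext (congrArg (WithLp.toLp 2) h0))
    · have := congrArg (fun y : S => (y : EuclideanSpace ℝ (Fin n)).ofLp)
        (Module.End.mem_eigenspace_iff.1 hx.1)
      simpa only [LinearMap.coe_restrict_apply, SetLike.val_smul, ofLp_toLpLin, toLin'_apply,
        WithLp.ofLp_smul] using this

end lambda2

section Past

variable {Ω β γ : Type*} {mΩ : MeasurableSpace Ω} [mβ : MeasurableSpace β] [MeasurableSpace γ]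

theorem measurable_iSup_comap_lt_of_recursion {W : ℕ → Ω → β} {x : ℕ → Ω → γ} {f : β → γ → γ}
    (hf : Measurable (Function.uncurry f)) {c : γ} (h0 : ∀ ω, x 0 ω = c)
    (hrec : ∀ k ω, x (k + 1) ω = f (W k ω) (x k ω)) (k : ℕ) :
    Measurable[⨆ j < k, mβ.comap (W j)] (x k) := by
  induction k with
  | zero =>
    rw [funext h0]
    exact measurable_const
  | succ k ih =>
    rw [funext (hrec k)]
    have hW : Measurable[⨆ j < k + 1, mβ.comap (W j)] (W k) :=
      Measurable.of_comap_le (le_iSup₂_of_le k k.lt_succ_self le_rfl)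
    have hx : Measurable[⨆ j < k + 1, mβ.comap (W j)] (x k) :=
      ih.mono (biSup_mono fun j hj => hj.trans k.lt_succ_self) le_rfl
    exact hf.comp (hW.prodMk hx)

theorem ProbabilityTheory.iIndepFun.indepFun_of_measurable_iSup_comap_lt {μ : Measure Ω} {W : ℕ → Ω → β}
    (hW : ∀ k, Measurable (W k)) (h : iIndepFun W μ) {X : Ω → γ} {k : ℕ}
    (hX : Measurable[⨆ j < k, mβ.comap (W j)] X) : IndepFun (W k) X μ := by
  rw [iIndepFun_iff_iIndep] at h
  have := indep_iSup_of_disjoint (fun j => (hW j).comap_le) h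
    (S := {k}) (T := Set.Iio k) (by simp)
  rw [IndepFun_iff_Indep]
  simp only [Set.mem_singleton_iff, iSup_iSup_eq_left, Set.mem_Iio] at this
  exact indep_of_indep_of_le_right this hX.comap_le

end Past

section SecondMoments

variable {Ω ι κ : Type*} {mΩ : MeasurableSpace Ω} {μ : Measure Ω}

theorem memLp_two_of_integrable_sum_sq [Fintype ι] {v : Ω → ι → ℝ} (hv : Measurable v)
    (h : Integrable (fun ω => ∑ i, v ω i ^ 2) μ) (i : ι) : MemLp (fun ω => v ω i) 2 μ := by
  refine (memLp_two_iff_integrable_sq (by fun_prop)).2 (h.mono (by fun_prop) (ae_of_all _ ?_))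
  intro ω
  rw [Real.norm_of_nonneg (sq_nonneg _),
    Real.norm_of_nonneg (Finset.sum_nonneg fun j _ => sq_nonneg (v ω j))]
  exact Finset.single_le_sum (f := fun j => v ω j ^ 2) (fun j _ => sq_nonneg _)
    (Finset.mem_univ i)

theorem integrable_mul_of_integrable_sum_sq [Fintype ι] {v : Ω → ι → ℝ} (hv : Measurable v)
    (h : Integrable (fun ω => ∑ i, v ω i ^ 2) μ) (i j : ι) :
    Integrable (fun ω => v ω i * v ω j) μ :=
  (memLp_two_of_integrable_sum_sq hv h i).integrable_mul (memLp_two_of_integrable_sum_sq hv h j)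

theorem integrable_gram_of_integrable_diag [Fintype κ] {A : Ω → κ → ι → ℝ} (hA : Measurable A)
    (h : ∀ i, Integrable (fun ω => ((of (A ω))ᵀ * of (A ω)) i i) μ) (i j : ι) :
    Integrable (fun ω => ((of (A ω))ᵀ * of (A ω)) i j) μ := by
  have hcol (i : ι) (l : κ) : MemLp (fun ω => A ω l i) 2 μ :=
    memLp_two_of_integrable_sum_sq (v := fun ω l => A ω l i) (by fun_prop)
      (by simpa [mul_apply, sq] using h i) l
  simpa [mul_apply] using integrable_finsetSum _ fun l _ => (hcol i l).integrable_mul (hcol j l)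

theorem integral_sum_sq_mulVec_of_indepFun [Fintype ι] [Fintype κ] {A : Ω → κ → ι → ℝ}
    {v : Ω → ι → ℝ} (hA : Measurable A) (hv : Measurable v) (hAv : IndepFun A v μ)
    (hAint : ∀ i j, Integrable (fun ω => ((of (A ω))ᵀ * of (A ω)) i j) μ)
    (hv2 : Integrable (fun ω => ∑ i, v ω i ^ 2) μ) :
    Integrable (fun ω => ∑ l, (of (A ω) *ᵥ v ω) l ^ 2) μ ∧
      ∫ ω, ∑ l, (of (A ω) *ᵥ v ω) l ^ 2 ∂μ =
        ∫ ω, v ω ⬝ᵥ (of (fun i j => ∫ ω', ((of (A ω'))ᵀ * of (A ω')) i j ∂μ) *ᵥ v ω) ∂μ := by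
  have hind (i j : ι) : IndepFun (fun ω => ((of (A ω))ᵀ * of (A ω)) i j)
      (fun ω => v ω i * v ω j) μ := by
    refine hAv.comp (φ := fun B : κ → ι → ℝ => ((of B)ᵀ * of B) i j)
      (ψ := fun x : ι → ℝ => x i * x j) ?_ (by fun_prop)
    simp only [mul_apply, transpose_apply, of_apply]
    fun_prop
  have hvij := integrable_mul_of_integrable_sum_sq hv hv2
  have hprod (i j : ι) : Integrable
      (fun ω => ((of (A ω))ᵀ * of (A ω)) i j * (v ω i * v ω j)) μ :=
    (hind i j).integrable_mul (hAint i j) (hvij i j)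
  have integral_sum_sum {f : ι → ι → Ω → ℝ} (hf : ∀ i j, Integrable (f i j) μ) :
      ∫ ω, ∑ i, ∑ j, f i j ω ∂μ = ∑ i, ∑ j, ∫ ω, f i j ω ∂μ := by
    rw [integral_finsetSum _ fun i _ => integrable_finsetSum _ fun j _ => hf i j]
    exact Finset.sum_congr rfl fun i _ => integral_finsetSum _ fun j _ => hf i j
  simp only [sum_sq_mulVec, dotProduct_mulVec_eq_sum, of_apply]
  refine ⟨integrable_finsetSum _ fun i _ => integrable_finsetSum _ fun j _ => hprod i j, ?_⟩
  rw [integral_sum_sum hprod, integral_sum_sum fun i j => (hvij i j).const_mul _]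
  refine Finset.sum_congr rfl fun i _ => Finset.sum_congr rfl fun j _ => ?_
  rw [integral_const_mul]
  exact (hind i j).integral_fun_mul_eq_mul_integral (by fun_prop) (by fun_prop)

theorem integral_dotProduct_mulVec_le [Fintype ι] {v : Ω → ι → ℝ} (hv : Measurable v)
    (hv2 : Integrable (fun ω => ∑ i, v ω i ^ 2) μ) {B : Matrix ι ι ℝ} {c : ℝ}
    (hB : ∀ ω, v ω ⬝ᵥ (B *ᵥ v ω) ≤ c * ∑ i, v ω i ^ 2) :
    ∫ ω, v ω ⬝ᵥ (B *ᵥ v ω) ∂μ ≤ c * ∫ ω, ∑ i, v ω i ^ 2 ∂μ := by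
  have hint : Integrable (fun ω => v ω ⬝ᵥ (B *ᵥ v ω)) μ := by
    simp only [dotProduct_mulVec_eq_sum]
    exact integrable_finsetSum _ fun i _ => integrable_finsetSum _ fun j _ =>
      (integrable_mul_of_integrable_sum_sq hv hv2 i j).const_mul _
  rw [← integral_const_mul]
  exact integral_mono hint (hv2.const_mul c) hB

end SecondMoments

theorem stmt_7_general {n : ℕ} {Ω : Type*} [MeasurableSpace Ω] (μ : Measure Ω)
    [IsProbabilityMeasure μ]
    (W : ℕ → Ω → (Fin n → Fin n → ℝ))
    (hWmeas : ∀ k, Measurable (W k))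
    (hWindep : iIndepFun W μ)
    (M : Matrix (Fin n) (Fin n) ℝ)
    (hMpsd : M.PosSemidef)
    (hMcol : ∀ j, ∑ i, M i j = 1)
    (hM : ∀ k i j, (∫ ω, ((Matrix.of (W k ω))ᵀ * Matrix.of (W k ω)) i j ∂μ) = M i j)
    (hWones : ∀ k ω (v : Fin n → ℝ), (∑ l, v l) = 0 →
      ∑ l, (Matrix.of (W k ω) *ᵥ v) l = 0)
    (e : ℕ → Ω → (Fin n → ℝ)) (e0 : Fin n → ℝ)
    (he0 : ∀ ω, e 0 ω = e0) (he0sum : ∑ l, e0 l = 0)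
    (herec : ∀ k ω, e (k + 1) ω = Matrix.of (W k ω) *ᵥ e k ω) :
    ∀ k, (∫ ω, ∑ l, (e k ω l) ^ 2 ∂μ) ≤ lambda2 M ^ k * ∑ l, e0 l ^ 2 := by
  have hsum (k : ℕ) (ω : Ω) : ∑ l, e k ω l = 0 := by
    induction k with
    | zero => rw [he0]; exact he0sum
    | succ k ih => rw [herec]; exact hWones k ω _ ih
  have hpast := measurable_iSup_comap_lt_of_recursion (W := W) (f := fun A v => of A *ᵥ v)
    (by apply Continuous.measurable; exact continuous_fst.matrix_mulVec continuous_snd) he0 herec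
  have he (k : ℕ) : Measurable (e k) :=
    (hpast k).mono (iSup₂_le fun j _ => (hWmeas j).comap_le) le_rfl
  -- a non-integrable function has integral `0`, so `M i i ≠ 0` forces integrability
  have hgram (k : ℕ) := integrable_gram_of_integrable_diag (μ := μ) (hWmeas k) fun i =>
    .of_integral_ne_zero (by rw [hM]; exact hMpsd.diag_ne_zero_of_sum_col_eq_one hMcol i)
  have hmean (k : ℕ) : of (fun i j => ∫ ω, ((of (W k ω))ᵀ * of (W k ω)) i j ∂μ) = M := by
    ext i j; exact hM k i j
  suffices key : ∀ k, Integrable (fun ω => ∑ l, e k ω l ^ 2) μ ∧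
      ∫ ω, ∑ l, e k ω l ^ 2 ∂μ ≤ lambda2 M ^ k * ∑ l, e0 l ^ 2 from fun k => (key k).2
  intro k
  induction k with
  | zero => simp [he0]
  | succ k ih =>
    obtain ⟨hint, heq⟩ := integral_sum_sq_mulVec_of_indepFun (hWmeas k) (he k)
      (hWindep.indepFun_of_measurable_iSup_comap_lt hWmeas (hpast k)) (hgram k) ih.1
    simp only [herec]
    refine ⟨hint, ?_⟩
    calc _ = ∫ ω, e k ω ⬝ᵥ (M *ᵥ e k ω) ∂μ := by rw [heq, hmean]
      _ ≤ lambda2 M * ∫ ω, ∑ l, e k ω l ^ 2 ∂μ := integral_dotProduct_mulVec_le (he k) ih.1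
          fun ω => dotProduct_mulVec_le_lambda2_mul hMpsd.1 hMcol (hsum k ω)
      _ ≤ lambda2 M * (lambda2 M ^ k * ∑ l, e0 l ^ 2) :=
          mul_le_mul_of_nonneg_left ih.2 (lambda2_nonneg hMpsd)
      _ = lambda2 M ^ (k + 1) * ∑ l, e0 l ^ 2 := by ring

theorem stmt_7 {n : ℕ} {Ω : Type*} [MeasurableSpace Ω] (μ : Measure Ω)
    [IsProbabilityMeasure μ]
    (W : ℕ → Ω → (Fin n → Fin n → ℝ))
    (hWmeas : ∀ k, Measurable (W k))
    (hWindep : iIndepFun W μ)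
    (M : Matrix (Fin n) (Fin n) ℝ)
    (hMsymm : M.IsSymm) (hMpsd : M.PosSemidef)
    (hMnn : ∀ i j, 0 ≤ M i j)
    (hMrow : ∀ i, ∑ j, M i j = 1) (hMcol : ∀ j, ∑ i, M i j = 1)
    (hM : ∀ k i j, (∫ ω, ((Matrix.of (W k ω))ᵀ * Matrix.of (W k ω)) i j ∂μ) = M i j)
    (hWones : ∀ k ω (v : Fin n → ℝ), (∑ l, v l) = 0 →
      ∑ l, (Matrix.of (W k ω) *ᵥ v) l = 0)
    (e : ℕ → Ω → (Fin n → ℝ)) (e0 : Fin n → ℝ)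
    (he0 : ∀ ω, e 0 ω = e0) (he0sum : ∑ l, e0 l = 0)
    (herec : ∀ k ω, e (k + 1) ω = Matrix.of (W k ω) *ᵥ e k ω) :
    ∀ k, (∫ ω, ∑ l, (e k ω l) ^ 2 ∂μ) ≤ lambda2 M ^ k * ∑ l, e0 l ^ 2 :=
  stmt_7_general μ W hWmeas hWindep M hMpsd hMcol hM hWones e e0 he0 he0sum herec
end

section
/- Let (P_k) and (P̂_k) be sequences of symmetric positive definite nm×nm matrices satisfying P̂_{k+1} = W (Ā P̂_k Āᵀ + C) Wᵀ and P_{k+1} = Ā P_k Āᵀ + C, where W is symmetric doubly stochastic, Ā is orthogonal, C is symmetric PSD, and Tr(P̂_0) ≤ Tr(P_0). Then Tr(P̂_k) ≤ Tr(P_k) for all k ≥ 0. -/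
/-!
A doubly stochastic `W` cannot increase the trace of a positive semidefinite `X` under
`X ↦ W X Wᵀ`: since `2 Xᵢⱼ ≤ Xᵢᵢ + Xⱼⱼ`, the trace of `(WᵀW) X` is bounded by an average of
diagonal entries of `X` with doubly stochastic weights, i.e. by `tr X`. An orthogonal `A` leaves
traces unchanged under `X ↦ A X Aᵀ`. So the prediction step adds `tr C` to both traces and the
consensus step can only lower the trace of `P̂`, which propagates the inequality by induction.
-/

open Matrix

namespace Matrix

variable {ι : Type*} [Fintype ι] [DecidableEq ι]

theorem PosSemidef.two_mul_apply_le {X : Matrix ι ι ℝ} (hX : X.PosSemidef) (i j : ι) :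
    2 * X i j ≤ X i i + X j j := by
  have h := hX.dotProduct_mulVec_nonneg (Pi.single i 1 - Pi.single j 1)
  have hji : X j i = X i j := by simpa using hX.isHermitian.apply i j
  simp only [star_trivial, mulVec_sub, dotProduct_sub, sub_dotProduct, single_dotProduct,
    mulVec_single_one, col_apply, one_mul, hji] at h
  linarith

theorem trace_mul_le_trace_of_mem_doublyStochastic {S X : Matrix ι ι ℝ}
    (hS : S ∈ doublyStochastic ℝ ι) (hX : X.PosSemidef) : (S * X).trace ≤ X.trace := by
  have hrow := sum_row_of_mem_doublyStochastic hS
  have hcol := sum_col_of_mem_doublyStochastic hS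
  calc (S * X).trace = ∑ i, ∑ j, S i j * X j i := by simp [trace, mul_apply]
    _ ≤ ∑ i, ∑ j, S i j * ((X i i + X j j) / 2) := by
        gcongr with i _ j _
        · exact nonneg_of_mem_doublyStochastic hS
        · linarith [hX.two_mul_apply_le j i]
    _ = (∑ i, X i i * ∑ j, S i j + ∑ j, X j j * ∑ i, S i j) / 2 := by
        simp only [mul_add, add_div, Finset.sum_add_distrib, Finset.mul_sum, Finset.sum_div]
        congr 1
        · exact Finset.sum_congr rfl fun i _ => Finset.sum_congr rfl fun j _ => by ring
        · rw [Finset.sum_comm]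
          exact Finset.sum_congr rfl fun j _ => Finset.sum_congr rfl fun i _ => by ring
    _ = X.trace := by simp [hrow, hcol, trace, ← two_mul]

theorem trace_mul_mul_transpose_le_of_mem_doublyStochastic {W X : Matrix ι ι ℝ}
    (hW : W ∈ doublyStochastic ℝ ι) (hX : X.PosSemidef) : (W * X * Wᵀ).trace ≤ X.trace := by
  rw [trace_mul_cycle]
  exact trace_mul_le_trace_of_mem_doublyStochastic
    (mul_mem (transpose_mem_doublyStochastic_iff.mpr hW) hW) hX

theorem trace_mul_mul_transpose_of_mul_transpose_eq_one {A : Matrix ι ι ℝ} (hA : A * Aᵀ = 1)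
    (X : Matrix ι ι ℝ) : (A * X * Aᵀ).trace = X.trace := by
  rw [trace_mul_cycle, mul_eq_one_comm.mp hA, Matrix.one_mul]

end Matrix

theorem stmt_12_general {n m : ℕ}
    (P Phat : ℕ → Matrix (Fin (n * m)) (Fin (n * m)) ℝ)
    (hPhat : ∀ k, (Phat k).PosDef)
    (W A C : Matrix (Fin (n * m)) (Fin (n * m)) ℝ)
    (hWnn : ∀ i j, 0 ≤ W i j)
    (hWrow : ∀ i, ∑ j, W i j = 1) (hWcol : ∀ j, ∑ i, W i j = 1)
    (hA : A * Aᵀ = 1)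
    (hCpsd : C.PosSemidef)
    (hrecHat : ∀ k, Phat (k + 1) = W * (A * Phat k * Aᵀ + C) * Wᵀ)
    (hrec : ∀ k, P (k + 1) = A * P k * Aᵀ + C)
    (h0 : (Phat 0).trace ≤ (P 0).trace) :
    ∀ k, (Phat k).trace ≤ (P k).trace := by
  have hW : W ∈ doublyStochastic ℝ _ := mem_doublyStochastic_iff_sum.mpr ⟨hWnn, hWrow, hWcol⟩
  have htrA := trace_mul_mul_transpose_of_mul_transpose_eq_one hA
  intro k
  induction k with
  | zero => exact h0
  | succ k ih =>
    have hpsd : (A * Phat k * Aᵀ + C).PosSemidef := by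
      have := (hPhat k).posSemidef.mul_mul_conjTranspose_same A
      rw [conjTranspose_eq_transpose_of_trivial] at this
      exact this.add hCpsd
    calc (Phat (k + 1)).trace ≤ (A * Phat k * Aᵀ + C).trace :=
          hrecHat k ▸ trace_mul_mul_transpose_le_of_mem_doublyStochastic hW hpsd
      _ = (Phat k).trace + C.trace := by rw [trace_add, htrA]
      _ ≤ (P k).trace + C.trace := by linarith
      _ = (P (k + 1)).trace := by rw [hrec k, trace_add, htrA]

theorem stmt_12 {n m : ℕ}
    (P Phat : ℕ → Matrix (Fin (n * m)) (Fin (n * m)) ℝ)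
    (hP : ∀ k, (P k).PosDef) (hPhat : ∀ k, (Phat k).PosDef)
    (hPsymm : ∀ k, (P k).IsSymm) (hPhatsymm : ∀ k, (Phat k).IsSymm)
    (W A C : Matrix (Fin (n * m)) (Fin (n * m)) ℝ)
    (hWsymm : W.IsSymm) (hWnn : ∀ i j, 0 ≤ W i j)
    (hWrow : ∀ i, ∑ j, W i j = 1) (hWcol : ∀ j, ∑ i, W i j = 1)
    (hA : A * Aᵀ = 1)
    (hCsymm : C.IsSymm) (hCpsd : C.PosSemidef)
    (hrecHat : ∀ k, Phat (k + 1) = W * (A * Phat k * Aᵀ + C) * Wᵀ)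
    (hrec : ∀ k, P (k + 1) = A * P k * Aᵀ + C)
    (h0 : (Phat 0).trace ≤ (P 0).trace) :
    ∀ k, (Phat k).trace ≤ (P k).trace :=
  stmt_12_general P Phat hPhat W A C hWnn hWrow hWcol hA hCpsd hrecHat hrec h0
end
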